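/- Let T be a tree with vertex set V = {1,2,…,N} and let X ⊆ V. Call a permutation σ of X tight if for every edge e of T, the number of elements i ∈ X such that e lies on the unique path in T from i to σ(i) is either 0 or 2. Then for every real number t, det A(t)[X] = ∑_σ sign(σ) · t^{∑_{i∈X} d_{i,σ(i)}}, where the sum is over all tight permutations σ of X. -/

import Mathlib

open scoped Classical

/-- An edge `e` lies on the unique path between `i` and `j` in the graph `G`
iff its removal disconnects `i` from `j`. -/
def EdgeOnPath {V : Type*} (G : SimpleGraph V) (e : Sym2 V) (i j : V) : Prop :=
  ¬ (G.deleteEdges {e}).Reachable i j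

/-- A permutation `σ` of `X` is tight (w.r.t. the tree `T`) if every edge of
`T` lies on the path from `i` to `σ i` for either `0` or `2` elements
`i ∈ X`. -/
def TightPerm {N : ℕ} (T : SimpleGraph (Fin N)) (X : Finset (Fin N))
    (σ : Equiv.Perm {x // x ∈ X}) : Prop :=
  ∀ e ∈ T.edgeSet,
    {i : {x // x ∈ X} | EdgeOnPath T e i (σ i)}.ncard = 0 ∨
    {i : {x // x ∈ X} | EdgeOnPath T e i (σ i)}.ncard = 2

/-! Expanding the determinant, the term of `σ` is `sign σ * t ^ w(σ)` with
`w(σ) = ∑ i, d(i, σ i) = ∑ e, c_σ(e)`, where `c_σ(e)` counts the `i` whose path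
to `σ i` crosses the edge `e`. Each `c_σ(e)` is even: as many of these paths leave
a side of `e` as enter it. If `σ` is not tight, some edge `e` has `c_σ(e) ≥ 4`, so
two distinct `i, j` on the same side of `e` are sent across it. Then
`σ * swap i j` has the same `c(f)` for every edge `f`: the pairs `i, j` and
`σ i, σ j` are joined inside different components of `T - e`, so no edge
separates both. This sign-reversing, weight-preserving involution cancels all
non-tight terms. -/

open Finset

namespace SimpleGraph

variable {V : Type*} {G : SimpleGraph V}

theorem IsAcyclic.edgeOnPath_iff_mem_edges (hG : G.IsAcyclic) {x y : V} {p : G.Walk x y}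
    (hp : p.IsPath) (f : Sym2 V) : EdgeOnPath G f x y ↔ f ∈ p.edges := by
  refine ⟨p.mem_edges_of_not_reachable_deleteEdges, fun hf hr => ?_⟩
  induction f using Sym2.ind with | _ u v => ?_
  obtain ⟨q, hq⟩ := reachable_deleteEdges_iff_exists_walk.mp hr
  classical
  have : q.bypass = p :=
    congrArg Subtype.val ((hG.subsingleton_path x y).elim ⟨_, q.bypass_isPath⟩ ⟨p, hp⟩)
  exact hq (q.edges_bypass_subset_edges (this ▸ hf))

theorem IsTree.dist_eq_card_edgeOnPath [Fintype V] (hG : G.IsTree) (x y : V) :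
    G.dist x y = #{f ∈ G.edgeFinset | EdgeOnPath G f x y} := by
  obtain ⟨p, hp, hl⟩ := hG.connected.exists_path_of_dist x y
  have : {f ∈ G.edgeFinset | EdgeOnPath G f x y} = p.edges.toFinset := by
    ext f
    simp only [Finset.mem_filter, mem_edgeFinset, List.mem_toFinset,
      hG.isAcyclic.edgeOnPath_iff_mem_edges hp]
    exact ⟨And.right, fun hf => ⟨p.edges_subset_edgeSet hf, hf⟩⟩
  rw [this, List.toFinset_card_of_nodup hp.isTrail.edges_nodup, Walk.length_edges, hl]

theorem Connected.reachable_deleteEdges_or (hG : G.Connected) (u v x : V) :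
    (G.deleteEdges {s(u, v)}).Reachable x u ∨ (G.deleteEdges {s(u, v)}).Reachable x v := by
  obtain ⟨p⟩ := hG x u
  induction p with
  | nil => exact Or.inl .rfl
  | @cons a b c h q ih =>
    by_cases hab : s(a, b) = s(c, v)
    · rcases Sym2.eq_iff.mp hab with ⟨hac, -⟩ | ⟨hav, -⟩
      exacts [Or.inl (hac ▸ .rfl), Or.inr (hav ▸ .rfl)]
    · have hadj : (G.deleteEdges {s(c, v)}).Adj a b := by simpa [hab] using h
      exact ih.imp hadj.reachable.trans hadj.reachable.trans

theorem Connected.reachable_deleteEdges_of_not_reachable (hG : G.Connected) {e : Sym2 V}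
    {i x y : V} (hx : ¬ (G.deleteEdges {e}).Reachable i x)
    (hy : ¬ (G.deleteEdges {e}).Reachable i y) : (G.deleteEdges {e}).Reachable x y := by
  induction e using Sym2.ind with | _ u v => ?_
  rcases hG.reachable_deleteEdges_or u v i with hi | hi <;>
  rcases hG.reachable_deleteEdges_or u v x with hx' | hx' <;>
  rcases hG.reachable_deleteEdges_or u v y with hy' | hy' <;>
  first
  | exact hx'.trans hy'.symm
  | exact absurd (hi.trans hx'.symm) hx
  | exact absurd (hi.trans hy'.symm) hy

theorem Connected.edgeOnPath_iff (hG : G.Connected) (e : Sym2 V) (i a b : V) :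
    EdgeOnPath G e a b ↔
      ¬ ((G.deleteEdges {e}).Reachable a i ↔ (G.deleteEdges {e}).Reachable b i) := by
  refine not_congr ⟨fun h => ⟨h.symm.trans, h.trans⟩, fun h => ?_⟩
  by_cases ha : (G.deleteEdges {e}).Reachable a i
  · exact ha.trans (h.mp ha).symm
  · exact hG.reachable_deleteEdges_of_not_reachable (fun h' => ha h'.symm)
      (fun h' => ha (h.mpr h'.symm))

theorem reachable_deleteEdges_or_reachable_deleteEdges {e : Sym2 V} {i j x y : V}
    (hij : (G.deleteEdges {e}).Reachable i j) (hxy : (G.deleteEdges {e}).Reachable x y)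
    (hix : ¬ (G.deleteEdges {e}).Reachable i x) (f : Sym2 V) :
    (G.deleteEdges {f}).Reachable i j ∨ (G.deleteEdges {f}).Reachable x y := by
  classical
  have hle : (G.deleteEdges {e}).deleteEdges {f} ≤ G.deleteEdges {f} :=
    deleteEdges_mono (deleteEdges_le _)
  obtain ⟨p⟩ := hij
  obtain ⟨q⟩ := hxy
  by_contra! h
  have hp := p.mem_edges_of_not_reachable_deleteEdges fun h' => h.1 (h'.mono hle)
  have hq := q.mem_edges_of_not_reachable_deleteEdges fun h' => h.2 (h'.mono hle)
  induction f using Sym2.ind with | _ a b => ?_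
  exact hix ((p.takeUntil a (p.fst_mem_support_of_mem_edges hp)).reachable.trans
    (q.takeUntil a (q.fst_mem_support_of_mem_edges hq)).reachable.symm)

theorem Connected.edgeOnPath_exchange (hG : G.Connected) {e : Sym2 V} {i j x y : V}
    (hij : (G.deleteEdges {e}).Reachable i j) (hix : EdgeOnPath G e i x)
    (hjy : EdgeOnPath G e j y) (f : Sym2 V) :
    (if EdgeOnPath G f i y then 1 else 0 : ℕ) + (if EdgeOnPath G f j x then 1 else 0) =
      (if EdgeOnPath G f i x then 1 else 0) + (if EdgeOnPath G f j y then 1 else 0) := by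
  have hxy : (G.deleteEdges {e}).Reachable x y :=
    hG.reachable_deleteEdges_of_not_reachable hix fun h => hjy (hij.symm.trans h)
  rcases reachable_deleteEdges_or_reachable_deleteEdges hij hxy hix f with h | h
  · have h₁ : EdgeOnPath G f i y ↔ EdgeOnPath G f j y := not_congr ⟨h.symm.trans, h.trans⟩
    have h₂ : EdgeOnPath G f j x ↔ EdgeOnPath G f i x := not_congr ⟨h.trans, h.symm.trans⟩
    rw [if_congr h₁ rfl rfl, if_congr h₂ rfl rfl, add_comm]
  · have h₁ : EdgeOnPath G f i y ↔ EdgeOnPath G f i x :=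
      not_congr ⟨(·.trans h.symm), (·.trans h)⟩
    have h₂ : EdgeOnPath G f j x ↔ EdgeOnPath G f j y :=
      not_congr ⟨(·.trans h), (·.trans h.symm)⟩
    rw [if_congr h₁ rfl rfl, if_congr h₂ rfl rfl]

end SimpleGraph

namespace Equiv.Perm

variable {α : Type*} [Fintype α]

theorem card_filter_and_not_apply (σ : Perm α) (P : α → Prop) [DecidablePred P] :
    #{k | P k ∧ ¬ P (σ k)} = #{k | ¬ P k ∧ P (σ k)} := by
  have h₁ := card_filter_add_card_filter_not (s := {k | P k}) fun k => P (σ k)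
  have h₂ := card_filter_add_card_filter_not (s := {k | P (σ k)}) fun k => P k
  have h₃ : #{k | P k} = #{k | P (σ k)} :=
    (card_bijective σ σ.bijective fun k => by simp).symm
  simp only [filter_filter, and_comm (a := P (σ _))] at h₁ h₂
  omega

theorem sum_apply_mul_swap {M : Type*} [AddCommMonoid M] [DecidableEq α] (σ : Perm α)
    (w : α → α → M) {i j : α} (hij : i ≠ j)
    (h : w i (σ j) + w j (σ i) = w i (σ i) + w j (σ j)) :
    ∑ k, w k ((σ * swap i j) k) = ∑ k, w k (σ k) := by
  have hs : {i, j} ⊆ (univ : Finset α) := subset_univ _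
  rw [← sum_sdiff hs, ← sum_sdiff hs, sum_pair hij, sum_pair hij]
  simp only [mul_apply, swap_apply_left, swap_apply_right, h]
  congr 1
  refine sum_congr rfl fun k hk => ?_
  simp only [mem_sdiff, mem_univ, mem_insert, mem_singleton, true_and, not_or] at hk
  rw [swap_apply_of_ne_of_ne hk.1 hk.2]

theorem card_filter_not_iff_apply_eq_two_mul (σ : Perm α) (P : α → Prop) [DecidablePred P] :
    #{k | ¬ (P k ↔ P (σ k))} = 2 * #{k | P k ∧ ¬ P (σ k)} := by
  have h (k : α) : ¬ (P k ↔ P (σ k)) ↔ P k ∧ ¬ P (σ k) ∨ ¬ P k ∧ P (σ k) := by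
    tauto
  rw [filter_congr fun k _ => h k, filter_or,
    card_union_of_disjoint (disjoint_filter.mpr fun _ _ h h' => h'.1 h.1),
    ← card_filter_and_not_apply, two_mul]

end Equiv.Perm

open Equiv

section Crossings

variable {V : Type*} {T : SimpleGraph V} {X : Finset V}

variable (T) in
noncomputable def crossings (σ : Perm X) (f : Sym2 V) : Finset X :=
  {k | EdgeOnPath T f k (σ k)}

variable (T) in
def IsOverloaded (σ : Perm X) (f : Sym2 V) : Prop :=
  f ∈ T.edgeSet ∧ ¬ (#(crossings T σ f) = 0 ∨ #(crossings T σ f) = 2)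

variable (T) in
def IsSwitchPair (σ : Perm X) (e : Sym2 V) (p : X × X) : Prop :=
  p.1 ≠ p.2 ∧ p.1 ∈ crossings T σ e ∧ p.2 ∈ crossings T σ e ∧
    (T.deleteEdges {e}).Reachable p.1 p.2

@[simp]
theorem mem_crossings {σ : Perm X} {f : Sym2 V} {k : X} :
    k ∈ crossings T σ f ↔ EdgeOnPath T f k (σ k) := by
  simp [crossings]

theorem not_tightPerm_iff {N : ℕ} {T : SimpleGraph (Fin N)} {X : Finset (Fin N)}
    (σ : Perm X) : ¬ TightPerm T X σ ↔ ∃ f, IsOverloaded T σ f := by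
  have h (f : Sym2 (Fin N)) : {i : X | EdgeOnPath T f i (σ i)}.ncard = #(crossings T σ f) := by
    rw [← Set.ncard_coe_finset]; simp [crossings]
  simp [TightPerm, IsOverloaded, h]

theorem sum_dist_eq_sum_card_crossings [Fintype V] (hT : T.IsTree) (σ : Perm X) :
    ∑ k : X, T.dist k (σ k) = ∑ f ∈ T.edgeFinset, #(crossings T σ f) := by
  simp only [hT.dist_eq_card_edgeOnPath, crossings, card_filter]
  exact sum_comm

theorem card_crossings_eq_two_mul (hT : T.Connected) (σ : Perm X) (e : Sym2 V) (i : V) :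
    #(crossings T σ e) =
      2 * #((crossings T σ e).filter fun k : X => (T.deleteEdges {e}).Reachable k i) := by
  convert σ.card_filter_not_iff_apply_eq_two_mul (fun k : X => (T.deleteEdges {e}).Reachable k i)
    using 3
  · ext k; simp [crossings, hT.edgeOnPath_iff e i]
  · ext k; simp only [crossings, hT.edgeOnPath_iff e i, mem_filter, mem_univ, true_and]; tauto

theorem exists_isSwitchPair (hT : T.Connected) {σ : Perm X} {e : Sym2 V}
    (he : IsOverloaded T σ e) : ∃ p, IsSwitchPair T σ e p := by
  obtain ⟨i, hi⟩ : (crossings T σ e).Nonempty := card_ne_zero.mp (not_or.mp he.2).1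
  set S := (crossings T σ e).filter fun k : X => (T.deleteEdges {e}).Reachable k i
  have hS : 1 < #S := by
    have h₁ : 0 < #S := card_pos.mpr ⟨i, mem_filter.mpr ⟨hi, .rfl⟩⟩
    have h₂ : 2 * #S ≠ 2 := card_crossings_eq_two_mul hT σ e i ▸ (not_or.mp he.2).2
    omega
  obtain ⟨j, hj, hji⟩ := exists_mem_ne hS i
  obtain ⟨hj, hreach⟩ := mem_filter.mp hj
  exact ⟨(i, j), hji.symm, hi, hj, hreach.symm⟩

noncomputable def switchPair (hT : T.Connected) {σ : Perm X} (h : ∃ e, IsOverloaded T σ e) :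
    X × X :=
  (exists_isSwitchPair hT h.choose_spec).choose

theorem isSwitchPair_switchPair (hT : T.Connected) {σ : Perm X} (h : ∃ e, IsOverloaded T σ e) :
    IsSwitchPair T σ h.choose (switchPair hT h) :=
  (exists_isSwitchPair hT h.choose_spec).choose_spec

variable [DecidableEq V]

namespace IsSwitchPair

variable {σ : Perm X} {e : Sym2 V} {p : X × X}

theorem crossings_mul_swap (hp : IsSwitchPair T σ e p) :
    crossings T (σ * swap p.1 p.2) e = crossings T σ e := by
  obtain ⟨hne, hi, hj, hij⟩ := hp
  rw [mem_crossings] at hi hj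
  ext k
  rw [mem_crossings, mem_crossings, Perm.mul_apply]
  rcases eq_or_ne k p.1 with rfl | hk₁
  · rw [swap_apply_left]
    exact iff_of_true (fun h => hj (hij.symm.trans h)) hi
  rcases eq_or_ne k p.2 with rfl | hk₂
  · rw [swap_apply_right]
    exact iff_of_true (fun h => hi (hij.trans h)) hj
  rw [swap_apply_of_ne_of_ne hk₁ hk₂]

theorem card_crossings_mul_swap (hT : T.Connected) (hp : IsSwitchPair T σ e p) (f : Sym2 V) :
    #(crossings T (σ * swap p.1 p.2) f) = #(crossings T σ f) := by
  obtain ⟨hne, hi, hj, hij⟩ := hp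
  rw [mem_crossings] at hi hj
  simp only [crossings, card_filter]
  exact σ.sum_apply_mul_swap (fun k l : X => if EdgeOnPath T f k l then 1 else 0) hne
    (hT.edgeOnPath_exchange hij hi hj f)

theorem isSwitchPair_mul_swap (hp : IsSwitchPair T σ e p) :
    IsSwitchPair T (σ * swap p.1 p.2) e = IsSwitchPair T σ e := by
  funext q
  simp only [IsSwitchPair, hp.crossings_mul_swap]

theorem isOverloaded_mul_swap (hT : T.Connected) (hp : IsSwitchPair T σ e p) :
    IsOverloaded T (σ * swap p.1 p.2) = IsOverloaded T σ := by
  funext f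
  simp only [IsOverloaded, hp.card_crossings_mul_swap hT f]

end IsSwitchPair

noncomputable def switch (hT : T.Connected) (σ : Perm X) (h : ∃ e, IsOverloaded T σ e) :
    Perm X :=
  σ * swap (switchPair hT h).1 (switchPair hT h).2

variable {σ : Perm X}

theorem isOverloaded_switch (hT : T.Connected) (h : ∃ e, IsOverloaded T σ e) :
    IsOverloaded T (switch hT σ h) = IsOverloaded T σ :=
  (isSwitchPair_switchPair hT h).isOverloaded_mul_swap hT

/- The choices made by `switch` depend on `σ` only through the predicates `IsOverloaded T σ` and
`IsSwitchPair T σ e`, which the swap leaves unchanged. -/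
theorem switch_switch (hT : T.Connected) (h : ∃ e, IsOverloaded T σ e)
    (h' : ∃ e, IsOverloaded T (switch hT σ h) e) : switch hT (switch hT σ h) h' = σ := by
  have hp := isSwitchPair_switchPair hT h
  have he : h'.choose = h.choose := by
    congr 1
    exact isOverloaded_switch hT h
  have : switchPair hT h' = switchPair hT h := by
    unfold switchPair
    congr 1
    rw [he]
    exact hp.isSwitchPair_mul_swap
  rw [switch, this, switch, mul_assoc, swap_mul_self, mul_one]

theorem switch_ne_self (hT : T.Connected) (h : ∃ e, IsOverloaded T σ e) :
    switch hT σ h ≠ σ := by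
  rw [switch, Ne, mul_eq_left, swap_eq_one_iff]
  exact (isSwitchPair_switchPair hT h).1

theorem sign_switch (hT : T.Connected) (h : ∃ e, IsOverloaded T σ e) :
    Perm.sign (switch hT σ h) = - Perm.sign σ := by
  rw [switch, Perm.sign_mul, Perm.sign_swap (isSwitchPair_switchPair hT h).1, mul_neg_one]

theorem sum_dist_switch [Fintype V] (hT : T.IsTree) (h : ∃ e, IsOverloaded T σ e) :
    ∑ k : X, T.dist k (switch hT.connected σ h k) = ∑ k : X, T.dist k (σ k) := by
  simp only [sum_dist_eq_sum_card_crossings hT, switch,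
    (isSwitchPair_switchPair hT.connected h).card_crossings_mul_swap hT.connected]

end Crossings

theorem sum_not_tightPerm_sign_mul_pow_eq_zero {N : ℕ} {T : SimpleGraph (Fin N)} (hT : T.IsTree)
    (X : Finset (Fin N)) (t : ℝ) :
    ∑ σ ∈ univ.filter (fun σ => ¬ TightPerm T X σ),
      ((Perm.sign σ : ℤ) : ℝ) * t ^ (∑ i : X, T.dist i (σ i)) = 0 := by
  have hover {σ : Perm X} (hσ : σ ∈ univ.filter fun σ => ¬ TightPerm T X σ) :
      ∃ e, IsOverloaded T σ e :=
    (not_tightPerm_iff σ).mp (mem_filter.mp hσ).2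
  refine sum_involution (fun σ hσ => switch hT.connected σ (hover hσ)) (fun σ hσ => ?_)
    (fun σ hσ _ => switch_ne_self _ _) (fun σ hσ => ?_) (fun σ hσ => switch_switch _ _ _)
  · rw [sum_dist_switch hT, sign_switch]
    push_cast
    ring
  · rw [mem_filter, not_tightPerm_iff, isOverloaded_switch]
    exact ⟨mem_univ _, hover hσ⟩

/-- **Determinant via tight permutations**: the determinant of the principal
minor `A(t)[X]` of the tree-distance matrix is
`∑_σ sign σ · t^{∑_{i∈X} d i (σ i)}`, summing over tight permutations `σ`
of `X` only. -/
theorem det_eq_sum_tight_permutations (N : ℕ) (T : SimpleGraph (Fin N)) (hT : T.IsTree)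
    (X : Finset (Fin N)) (t : ℝ) :
    (Matrix.of fun i j : {x // x ∈ X} => t ^ T.dist i j).det =
      ∑ σ ∈ Finset.univ.filter (fun σ => TightPerm T X σ),
        ((Equiv.Perm.sign σ : ℤ) : ℝ) * t ^ (∑ i : {x // x ∈ X}, T.dist i (σ i)) := by
  have hdet : (Matrix.of fun i j : X => t ^ T.dist i j).det =
      ∑ σ : Perm X, ((Perm.sign σ : ℤ) : ℝ) * t ^ (∑ i : X, T.dist i (σ i)) := by
    refine (Matrix.det_apply' _).trans (sum_congr rfl fun σ _ => ?_)
    simp only [Matrix.of_apply, prod_pow_eq_pow_sum, T.dist_comm]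
  rw [hdet, ← sum_filter_add_sum_filter_not univ (TightPerm T X),
    sum_not_tightPerm_sign_mul_pow_eq_zero hT, add_zero]
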